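/- Let x : ℤ² → ℝ be such that x(v) > 0 for every v = (v₁,v₂) with v₁+v₂ ≥ 0, and such that for every v with v₁+v₂ ≥ 0: x(v+(1,1)) = 3x(v) + x(v+(1,0)) + x(v+(0,1)) + 2√2·√((x(v)+x(v+(1,0)))·(x(v)+x(v+(0,1)))). Then for every v = (v₁,v₂) with v₁+v₂ ≥ 2: ∏_{ε∈{−1,1}²} Qv(x,ε) = −E(x,v), with Q and E defined by the same formulas over ℝ. -/

import Mathlib

open Finset

noncomputable section

abbrev Z2 := ℤ × ℤ

/-- The 4 sign vectors in {-1,1}². -/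
def signs2 : Finset Z2 := ({-1, 1} : Finset ℤ) ×ˢ ({-1, 1} : Finset ℤ)

/-- The corner derivative `Q^C_v` (real version). -/
def cornerQR (x : Z2 → ℝ) (v ε : Z2) : ℝ :=
  (1 / (2 * Real.sqrt 2)) *
    (x (v + ε) - x (v + (ε.1, 0)) - x (v + (0, ε.2)) - 3 * x v)

/-- The product over the 4 lattice edges incident to `v` (real version). -/
def edgeProdR (x : Z2 → ℝ) (v : Z2) : ℝ :=
  (x v + x (v + (1,0))) * (x v + x (v + (-1,0))) *
  (x v + x (v + (0,1))) * (x v + x (v + (0,-1)))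


/-!
The recurrence on a unit square with corner values `a` (bottom left), `b`, `c` (its right and
upper neighbours) and `y` (top right) turns `y + b` and `y + c` into the perfect squares
`(√2 √(a+b) + √(a+c))²` and `(√(a+b) + √2 √(a+c))²`. Hence at each of the four corners the corner
combination equals `±2√2` times the product of the square roots of the two incident edge sums,
with the sign `+` only at the bottom-left corner. Around a vertex `v` with `v₁ + v₂ ≥ 2` all four
unit squares containing `v` obey the recurrence and `v` is the bottom-left corner of exactly one
of them, so the product of the corner derivatives is `-` the product of the four edge sums.
-/

open Real

section SquareRecurrence

variable {a b c y : ℝ}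

theorem rec_symm (hy : y = 3 * a + b + c + 2 * √2 * √((a + b) * (a + c))) :
    y = 3 * a + c + b + 2 * √2 * √((a + c) * (a + b)) := by
  rw [hy, mul_comm (a + c)]; ring

theorem sqrt_add_eq_of_rec (hab : 0 ≤ a + b) (hac : 0 ≤ a + c)
    (hy : y = 3 * a + b + c + 2 * √2 * √((a + b) * (a + c))) :
    √(y + b) = √2 * √(a + b) + √(a + c) := by
  rw [sqrt_mul hab] at hy
  rw [← sqrt_sq (by positivity : 0 ≤ √2 * √(a + b) + √(a + c))]
  congr 1
  linear_combination hy - √(a + b) ^ 2 * sq_sqrt zero_le_two - 2 * sq_sqrt hab - sq_sqrt hac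

theorem corner_bottomLeft (hab : 0 ≤ a + b)
    (hy : y = 3 * a + b + c + 2 * √2 * √((a + b) * (a + c))) :
    1 / (2 * √2) * (y - b - c - 3 * a) = √(a + b) * √(a + c) := by
  rw [← sqrt_mul hab, hy]
  field_simp
  ring

theorem corner_topRight (hab : 0 ≤ a + b) (hac : 0 ≤ a + c)
    (hy : y = 3 * a + b + c + 2 * √2 * √((a + b) * (a + c))) :
    1 / (2 * √2) * (a - c - b - 3 * y) = -(√(y + c) * √(y + b)) := by
  rw [sqrt_add_eq_of_rec hab hac hy, sqrt_add_eq_of_rec hac hab (rec_symm hy), hy, sqrt_mul hab]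
  field_simp
  linear_combination 4 * sq_sqrt hab + 4 * sq_sqrt hac
    + (2 * √(a + b) ^ 2 + 2 * √(a + c) ^ 2 + 2 * √2 * √(a + b) * √(a + c)) * sq_sqrt zero_le_two

theorem corner_topLeft (hab : 0 ≤ a + b) (hac : 0 ≤ a + c)
    (hy : y = 3 * a + b + c + 2 * √2 * √((a + b) * (a + c))) :
    1 / (2 * √2) * (b - y - a - 3 * c) = -(√(c + y) * √(c + a)) := by
  rw [add_comm c y, sqrt_add_eq_of_rec hac hab (rec_symm hy), hy, sqrt_mul hab, add_comm c a]
  field_simp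
  linear_combination 4 * sq_sqrt hac + 2 * √(a + c) ^ 2 * sq_sqrt zero_le_two

theorem corner_bottomRight (hab : 0 ≤ a + b) (hac : 0 ≤ a + c)
    (hy : y = 3 * a + b + c + 2 * √2 * √((a + b) * (a + c))) :
    1 / (2 * √2) * (c - a - y - 3 * b) = -(√(b + a) * √(b + y)) := by
  rw [sub_right_comm c, mul_comm (√(b + a))]
  exact corner_topLeft hac hab (rec_symm hy)

end SquareRecurrence

theorem prod_signs2 {M : Type*} [CommMonoid M] (f : Z2 → M) :
    ∏ ε ∈ signs2, f ε = f (-1, -1) * f (-1, 1) * (f (1, -1) * f (1, 1)) := by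
  have h : (-1 : ℤ) ≠ 1 := by norm_num
  rw [signs2, prod_product, prod_pair h, prod_pair h, prod_pair h]

theorem add_pair_add_pair (v : Z2) (i j k l : ℤ) : v + (i, j) + (k, l) = v + (i + k, j + l) := by
  rw [add_assoc]; rfl

theorem neg_prod_sqrt_pairs {p q r s : ℝ} (hp : 0 ≤ p) (hq : 0 ≤ q) (hr : 0 ≤ r) (hs : 0 ≤ s) :
    -(√p * √q) * -(√p * √r) * (-(√s * √q) * (√s * √r)) = -(s * p * r * q) := by
  rw [show -(√p * √q) * -(√p * √r) * (-(√s * √q) * (√s * √r))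
      = -((√s * √s) * (√p * √p) * (√r * √r) * (√q * √q)) by ring,
    mul_self_sqrt hp, mul_self_sqrt hq, mul_self_sqrt hr, mul_self_sqrt hs]

/-- Theorem s_holo_pos_thm. -/
theorem statement13 (x : Z2 → ℝ)
    (hpos : ∀ v : Z2, 0 ≤ v.1 + v.2 → 0 < x v)
    (hrec : ∀ v : Z2, 0 ≤ v.1 + v.2 →
      x (v + (1,1)) = 3 * x v + x (v + (1,0)) + x (v + (0,1))
        + 2 * Real.sqrt 2 *
            Real.sqrt ((x v + x (v + (1,0))) * (x v + x (v + (0,1))))) :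
    ∀ v : Z2, 2 ≤ v.1 + v.2 →
      ∏ ε ∈ signs2, cornerQR x v ε = - edgeProdR x v := by
  intro v hv
  have hx : ∀ i j : ℤ, -2 ≤ i + j → 0 ≤ x (v + (i, j)) := fun i j h =>
    (hpos _ (by simp only [Prod.fst_add, Prod.snd_add]; omega)).le
  have hrec_near : ∀ i j : ℤ, -2 ≤ i + j → x (v + (i, j) + (1, 1)) = _ := fun i j h =>
    hrec _ (by simp only [Prod.fst_add, Prod.snd_add]; omega)
  -- the four unit squares containing `v`, which is their bottom-left, top-right, top-left and
  -- bottom-right corner respectively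
  have r₀ := hrec v (by omega)
  have r₁ := hrec_near (-1) (-1) (by norm_num)
  have r₂ := hrec_near 0 (-1) (by norm_num)
  have r₃ := hrec_near (-1) 0 (by norm_num)
  norm_num [add_pair_add_pair, Prod.mk_zero_zero] at r₁ r₂ r₃
  have h₀ := (hpos v (by omega)).le
  have hR := hx 1 0 (by norm_num)
  have hU := hx 0 1 (by norm_num)
  have hL := hx (-1) 0 (by norm_num)
  have hD := hx 0 (-1) (by norm_num)
  have hLD := hx (-1) (-1) (by norm_num)
  have hRD := hx 1 (-1) (by norm_num)
  have hLU := hx (-1) 1 (by norm_num)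
  rw [prod_signs2, edgeProdR]
  simp only [cornerQR]
  rw [corner_bottomLeft (by positivity) r₀, corner_topRight (by positivity) (by positivity) r₁,
    corner_topLeft (by positivity) (by positivity) r₂,
    corner_bottomRight (by positivity) (by positivity) r₃]
  exact neg_prod_sqrt_pairs (by positivity) (by positivity) (by positivity) (by positivity)
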